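/- arXiv:2310.03629 — 6 statements merged into one kernel-verified Lean document; each statement's English description precedes it below -/
import Mathlib

section
/- Let $q_\sigma(k)$, $k \in \mathbb{Z}$, be a family of probability mass functions on the integers parameterized by $\sigma \ge 0$, satisfying: (i) $q_\sigma(k) = q_\sigma(-k)$ for all $k$; (ii) $q_\sigma(k) \ge q_\sigma(k')$ whenever $|k| \le |k'|$; (iii) for every $k$, $\lim_{\sigma \to \infty} q_\sigma(k) = 0$. Let $(a_k)_{k \in \mathbb{Z}}$ be a real sequence such that the symmetric Cesàro means converge: $\lim_{m \to \infty} \frac{1}{2m+1} \sum_{k=-m}^m a_k = \alpha$ for some real $\alpha$, and such that for every $\sigma > 0$, $\sum_{k=-\infty}^\infty q_\sigma(k) |a_k| < \infty$. Then $\lim_{\sigma \to \infty} \sum_{k=-\infty}^\infty q_\sigma(k) a_k = \alpha$. -/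
open Filter

private lemma tele_hasSum {f : ℕ → ℝ} (hnn : ∀ m, 0 ≤ f m) (hsf : Summable f)
    (hmono : ∀ m : ℕ, f (m + 1) ≤ f m) (n : ℕ) :
    HasSum (fun m : ℕ => f (n + m) - f (n + m + 1)) (f n) := by
  have hlim : Tendsto f atTop (nhds 0) := hsf.tendsto_atTop_zero
  have hps : ∀ N, ∑ i ∈ Finset.range N, (f (n + i) - f (n + i + 1)) = f n - f (n + N) := by
    intro N
    have := Finset.sum_range_sub' (fun i => f (n + i)) N
    simpa [add_assoc] using this
  have hsum : Summable (fun m => f (n + m) - f (n + m + 1)) := by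
    apply summable_of_sum_range_le (c := f n)
    · intro m; exact sub_nonneg.2 (hmono _)
    · intro N; rw [hps]; linarith [hnn (n + N)]
  have ht := hsum.hasSum.tendsto_sum_nat
  have hteq : (fun N => ∑ i ∈ Finset.range N, (f (n + i) - f (n + i + 1)))
      = fun N => f n - f (n + N) := funext hps
  rw [hteq] at ht
  have ht2 : Tendsto (fun N => f n - f (n + N)) atTop (nhds (f n - 0)) := by
    refine tendsto_const_nhds.sub ?_
    have h3 : Tendsto (fun N : ℕ => N + n) atTop atTop := tendsto_add_atTop_nat n
    have := hlim.comp h3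
    simpa [Function.comp_def, add_comm] using this
  have : ∑' m, (f (n + m) - f (n + m + 1)) = f n := by
    have := tendsto_nhds_unique ht ht2
    simpa using this
  exact this ▸ hsum.hasSum

/-- Slice: for each `k : ℤ`, the column sum of the layer-cake decomposition. -/
private lemma slice_hasSum {q : ℤ → ℝ}
    (hnn : ∀ k, 0 ≤ q k) (hsq : Summable q)
    (hmono : ∀ k k' : ℤ, |k| ≤ |k'| → q k' ≤ q k)
    (b : ℤ → ℝ) (k : ℤ) :
    HasSum (fun m : ℕ => if |k| ≤ (m : ℤ) then (q (m : ℤ) - q ((m : ℤ) + 1)) * b k else 0)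
      (q k * b k) := by
  set f : ℕ → ℝ := fun m => q (m : ℤ) with hf
  have hnnN : ∀ m, 0 ≤ f m := fun m => hnn _
  have hsfN : Summable f := hsq.comp_injective (fun x y h => by exact_mod_cast h)
  have hmonoN : ∀ m : ℕ, f (m + 1) ≤ f m := by
    intro m
    apply hmono
    rw [abs_of_nonneg (by positivity : (0:ℤ) ≤ (m:ℤ)),
      abs_of_nonneg (by positivity : (0:ℤ) ≤ ((m+1 : ℕ):ℤ))]
    push_cast; omega
  set n : ℕ := k.natAbs with hn
  have hkn : |k| = (n : ℤ) := Int.abs_eq_natAbs k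
  have hqk : q k = f n := by
    have h1 : |(n : ℤ)| = |k| := by rw [hkn]; exact abs_of_nonneg (by positivity)
    exact le_antisymm (hmono _ _ h1.le) (hmono _ _ h1.ge)
  have htele := tele_hasSum hnnN hsfN hmonoN n
  have hinj : Function.Injective (fun m : ℕ => n + m) := fun x y h => Nat.add_left_cancel h
  set F : ℕ → ℝ := fun m => if |k| ≤ (m : ℤ) then f m - f (m + 1) else 0 with hF
  have key : HasSum F (f n) := by
    have h0 : ∀ x ∉ Set.range (fun m : ℕ => n + m), F x = 0 := by
      intro x hx
      have hxn : x < n := by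
        by_contra h; push_neg at h; exact hx ⟨x - n, show n + (x - n) = x by omega⟩
      simp only [hF]
      rw [if_neg]; rw [hkn]; push_cast; omega
    rw [← hinj.hasSum_iff h0]
    have heq : (F ∘ fun m => n + m) = fun m => f (n + m) - f (n + m + 1) := by
      funext m; simp only [Function.comp, hF]
      rw [if_pos]; rw [hkn]; push_cast; omega
    rw [heq]; exact htele
  have heq2 : (fun m : ℕ => F m * b k)
      = fun m : ℕ => if |k| ≤ (m : ℤ) then (q (m : ℤ) - q ((m : ℤ) + 1)) * b k else 0 := by
    funext m
    simp only [hF, hf, ite_mul, zero_mul]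
    norm_cast
  rw [← heq2, hqk]
  exact key.mul_right (b k)

set_option maxHeartbeats 1000000 in
/-- Exchange of summation: layer-cake / Fubini. -/
private lemma exchange {q : ℤ → ℝ}
    (hnn : ∀ k, 0 ≤ q k) (hsq : Summable q)
    (hmono : ∀ k k' : ℤ, |k| ≤ |k'| → q k' ≤ q k)
    (b : ℤ → ℝ) (hb : Summable fun k => q k * |b k|) :
    HasSum (fun m : ℕ => (q (m : ℤ) - q ((m : ℤ) + 1)) * ∑ k ∈ Finset.Icc (-(m : ℤ)) m, b k)
      (∑' k, q k * b k) := by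
  have hd : ∀ m : ℕ, 0 ≤ q (m : ℤ) - q ((m : ℤ) + 1) := by
    intro m
    refine sub_nonneg.2 (hmono _ _ ?_)
    rw [abs_of_nonneg (by positivity : (0:ℤ) ≤ (m:ℤ)),
      abs_of_nonneg (by positivity : (0:ℤ) ≤ (m:ℤ) + 1)]
    omega
  set F : ℤ × ℕ → ℝ :=
    fun p => if |p.1| ≤ (p.2 : ℤ) then (q (p.2 : ℤ) - q ((p.2 : ℤ) + 1)) * b p.1 else 0 with hF
  have habsF : ∀ p : ℤ × ℕ, |F p|
      = if |p.1| ≤ (p.2 : ℤ) then (q (p.2 : ℤ) - q ((p.2 : ℤ) + 1)) * |b p.1| else 0 := by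
    intro p
    simp only [hF]
    split
    · rw [abs_mul, abs_of_nonneg (hd p.2)]
    · simp
  have hsliceabs : ∀ k : ℤ, HasSum (fun m : ℕ => |F (k, m)|) (q k * |b k|) := by
    intro k
    have h := slice_hasSum hnn hsq hmono (fun k => |b k|) k
    have heq : (fun m : ℕ => |F (k, m)|)
        = fun m : ℕ => if |k| ≤ (m : ℤ) then (q (m : ℤ) - q ((m : ℤ) + 1)) * |b k| else 0 :=
      funext fun m => habsF (k, m)
    rw [heq]; exact h
  have hsummableAbs : Summable (fun p : ℤ × ℕ => |F p|) := by
    rw [summable_prod_of_nonneg (fun p => abs_nonneg _)]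
    refine ⟨fun k => (hsliceabs k).summable, ?_⟩
    have : (fun k : ℤ => ∑' m : ℕ, |F (k, m)|) = fun k => q k * |b k| :=
      funext fun k => (hsliceabs k).tsum_eq
    rw [this]; exact hb
  have hFsummable : Summable F := hsummableAbs.of_abs
  have hslice : ∀ k : ℤ, HasSum (fun m : ℕ => F (k, m)) (q k * b k) :=
    fun k => slice_hasSum hnn hsq hmono b k
  have hcol : HasSum (fun k : ℤ => q k * b k) (∑' p, F p) :=
    hFsummable.hasSum.prod_fiberwise hslice
  have htsum : ∑' p, F p = ∑' k, q k * b k := hcol.tsum_eq.symm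
  have hrow : ∀ m : ℕ, HasSum (fun k : ℤ => F (k, m))
      ((q (m : ℤ) - q ((m : ℤ) + 1)) * ∑ k ∈ Finset.Icc (-(m : ℤ)) m, b k) := by
    intro m
    have h0 : ∀ k ∉ Finset.Icc (-(m : ℤ)) (m : ℤ), F (k, m) = 0 := by
      intro k hk
      simp only [hF]
      rw [if_neg]
      intro h
      exact hk (Finset.mem_Icc.2 ⟨neg_le_of_abs_le h, le_of_abs_le h⟩)
    have hsum : HasSum (fun k : ℤ => F (k, m)) (∑ k ∈ Finset.Icc (-(m : ℤ)) (m : ℤ), F (k, m)) :=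
      hasSum_sum_of_ne_finset_zero h0
    have heq : ∑ k ∈ Finset.Icc (-(m : ℤ)) (m : ℤ), F (k, m)
        = (q (m : ℤ) - q ((m : ℤ) + 1)) * ∑ k ∈ Finset.Icc (-(m : ℤ)) m, b k := by
      rw [Finset.mul_sum]
      refine Finset.sum_congr rfl fun k hk => ?_
      rw [Finset.mem_Icc] at hk
      simp only [hF]
      rw [if_pos (abs_le.2 ⟨hk.1, hk.2⟩)]
    rwa [heq] at hsum
  have hswap : HasSum (fun p : ℕ × ℤ => F (p.2, p.1)) (∑' p, F p) :=
    (Equiv.hasSum_iff (Equiv.prodComm ℕ ℤ)).mpr hFsummable.hasSum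
  have final := hswap.prod_fiberwise hrow
  rwa [htsum] at final

/-- Lemma 1 (Equivalence of Cesàro Sums). -/
theorem cesaro_equivalence
    (q : ℝ → ℤ → ℝ)
    (hq_nonneg : ∀ σ ≥ (0:ℝ), ∀ k : ℤ, 0 ≤ q σ k)
    (hq_pmf : ∀ σ ≥ (0:ℝ), HasSum (q σ) 1)
    (hq_symm : ∀ σ ≥ (0:ℝ), ∀ k : ℤ, q σ k = q σ (-k))
    (hq_mono : ∀ σ ≥ (0:ℝ), ∀ k k' : ℤ, |k| ≤ |k'| → q σ k' ≤ q σ k)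
    (hq_vanish : ∀ k : ℤ, Tendsto (fun σ => q σ k) atTop (nhds 0))
    (a : ℤ → ℝ) (α : ℝ)
    (hces : Tendsto (fun m : ℕ => (2 * (m : ℝ) + 1)⁻¹ * ∑ k ∈ Finset.Icc (-(m:ℤ)) (m:ℤ), a k)
      atTop (nhds α))
    (hsum : ∀ σ > (0:ℝ), Summable (fun k : ℤ => q σ k * |a k|)) :
    Tendsto (fun σ : ℝ => ∑' k : ℤ, q σ k * a k) atTop (nhds α) := by
  -- notation
  set S : ℕ → ℝ := fun m => (2 * (m : ℝ) + 1)⁻¹ * ∑ k ∈ Finset.Icc (-(m:ℤ)) (m:ℤ), a k with hS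
  set c : ℝ → ℕ → ℝ := fun σ m => (q σ (m : ℤ) - q σ ((m : ℤ) + 1)) * (2 * (m : ℝ) + 1) with hc
  have h2m : ∀ m : ℕ, (0:ℝ) < 2 * (m : ℝ) + 1 := fun m => by positivity
  have hcnn : ∀ σ ≥ (0:ℝ), ∀ m : ℕ, 0 ≤ c σ m := by
    intro σ hσ m
    refine mul_nonneg (sub_nonneg.2 (hq_mono σ hσ _ _ ?_)) (h2m m).le
    rw [abs_of_nonneg (by positivity : (0:ℤ) ≤ (m:ℤ)),
      abs_of_nonneg (by positivity : (0:ℤ) ≤ (m:ℤ) + 1)]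
    omega
  -- c σ is a pmf on ℕ
  have hc1 : ∀ σ ≥ (0:ℝ), HasSum (c σ) 1 := by
    intro σ hσ
    have hb1 : Summable fun k : ℤ => q σ k * |(1:ℝ)| := by
      simpa using (hq_pmf σ hσ).summable
    have h := exchange (hq_nonneg σ hσ) (hq_pmf σ hσ).summable (hq_mono σ hσ) (fun _ => (1:ℝ)) hb1
    have hcard : ∀ m : ℕ, ∑ k ∈ Finset.Icc (-(m:ℤ)) (m:ℤ), (1:ℝ) = 2 * (m : ℝ) + 1 := by
      intro m
      rw [Finset.sum_const, Int.card_Icc]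
      have h1 : ((m : ℤ) + 1 - -(m : ℤ)).toNat = 2 * m + 1 := by omega
      rw [h1]
      push_cast
      ring
    have htsum1 : ∑' k : ℤ, q σ k * (1:ℝ) = 1 := by
      simpa using (hq_pmf σ hσ).tsum_eq
    have heq : (fun m : ℕ => (q σ (m : ℤ) - q σ ((m : ℤ) + 1))
        * ∑ k ∈ Finset.Icc (-(m:ℤ)) (m:ℤ), (1:ℝ)) = c σ := by
      funext m; rw [hcard m]
    rw [heq, htsum1] at h
    exact h
  -- representation of the smoothed sum
  have hrep : ∀ σ > (0:ℝ), HasSum (fun m : ℕ => c σ m * S m) (∑' k : ℤ, q σ k * a k) := by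
    intro σ hσ
    have h := exchange (hq_nonneg σ hσ.le) (hq_pmf σ hσ.le).summable (hq_mono σ hσ.le) a (hsum σ hσ)
    have heq : (fun m : ℕ => (q σ (m : ℤ) - q σ ((m : ℤ) + 1))
        * ∑ k ∈ Finset.Icc (-(m:ℤ)) (m:ℤ), a k) = fun m => c σ m * S m := by
      funext m
      simp only [hc, hS]
      field_simp
    rw [heq] at h
    exact h
  -- the ε-argument
  rw [Metric.tendsto_atTop]
  intro ε hε
  have hε3 : 0 < ε / 3 := by linarith
  -- choose M from Cesàro convergence
  obtain ⟨M, hM⟩ := (Metric.tendsto_atTop.1 hces) (ε / 3) hε3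
  have hMabs : ∀ m ≥ M, |S m - α| ≤ ε / 3 := by
    intro m hm
    have := hM m hm
    rw [Real.dist_eq] at this
    exact this.le
  -- head mass tends to zero
  have hhead : Tendsto (fun σ => ∑ m ∈ Finset.range M, c σ m * |S m - α|) atTop (nhds 0) := by
    have : ∀ m ∈ Finset.range M, Tendsto (fun σ => c σ m * |S m - α|) atTop (nhds 0) := by
      intro m _
      have h1 : Tendsto (fun σ => q σ (m:ℤ) - q σ ((m:ℤ)+1)) atTop (nhds 0) := by
        simpa using (hq_vanish (m:ℤ)).sub (hq_vanish ((m:ℤ)+1))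
      have h2 := h1.mul_const ((2 * (m:ℝ) + 1) * |S m - α|)
      simp only [zero_mul] at h2
      refine h2.congr fun σ => by simp only [hc]; ring
    have := tendsto_finset_sum (Finset.range M) this
    simpa using this
  obtain ⟨N, hN⟩ := (Metric.tendsto_atTop.1 hhead) (ε / 3) hε3
  refine ⟨max N 1, fun σ hσ => ?_⟩
  have hσ1 : (1:ℝ) ≤ σ := le_trans (le_max_right N 1) hσ
  have hσ0 : (0:ℝ) < σ := lt_of_lt_of_le one_pos hσ1
  have hσN : N ≤ σ := le_trans (le_max_left N 1) hσ
  -- summability facts at this σ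
  have hcs : Summable (c σ) := (hc1 σ hσ0.le).summable
  have hcS : Summable (fun m => c σ m * S m) := (hrep σ hσ0).summable
  have hdiff : Summable (fun m => c σ m * (S m - α)) := by
    have := hcS.sub (hcs.mul_right α)
    refine this.congr fun m => by ring
  have habs : Summable (fun m => c σ m * |S m - α|) := by
    have := hdiff.abs
    refine this.congr fun m => ?_
    rw [abs_mul, abs_of_nonneg (hcnn σ hσ0.le m)]
  -- the key identity
  have hkey : (∑' k : ℤ, q σ k * a k) - α = ∑' m, c σ m * (S m - α) := by
    have h1 : ∑' m, c σ m * S m = ∑' k : ℤ, q σ k * a k := (hrep σ hσ0).tsum_eq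
    have h2 : ∑' m, c σ m * α = α := by
      rw [tsum_mul_right, (hc1 σ hσ0.le).tsum_eq, one_mul]
    have h3 : ∑' m, (c σ m * S m - c σ m * α) = ∑' m, c σ m * (S m - α) :=
      tsum_congr fun m => (mul_sub _ _ _).symm
    rw [← h3, Summable.tsum_sub hcS (hcs.mul_right α), h1, h2]
  rw [Real.dist_eq, hkey]
  -- bound by the absolute series
  have hb1 : |∑' m, c σ m * (S m - α)| ≤ ∑' m, c σ m * |S m - α| := by
    have := norm_tsum_le_tsum_norm (f := fun m => c σ m * (S m - α)) ?_
    · simpa [Real.norm_eq_abs, abs_mul, abs_of_nonneg (hcnn σ hσ0.le _)] using this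
    · refine habs.congr fun m => ?_
      rw [Real.norm_eq_abs, abs_mul, abs_of_nonneg (hcnn σ hσ0.le m)]
  -- split head and tail
  have hsplit : ∑' m, c σ m * |S m - α|
      = ∑ m ∈ Finset.range M, c σ m * |S m - α| + ∑' m, c σ (m + M) * |S (m + M) - α| :=
    (Summable.sum_add_tsum_nat_add M habs).symm
  -- head bound
  have hheadlt : ∑ m ∈ Finset.range M, c σ m * |S m - α| < ε / 3 := by
    have := hN σ hσN
    rw [Real.dist_eq, sub_zero] at this
    exact (le_abs_self (∑ m ∈ Finset.range M, c σ m * |S m - α|)).trans_lt this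
  -- tail bound
  have htailsummable : Summable (fun m => c σ (m + M) * |S (m + M) - α|) :=
    (summable_nat_add_iff M).2 habs
  have hcshift : Summable (fun m => c σ (m + M)) := (summable_nat_add_iff M).2 hcs
  have htail1 : ∑' m, c σ (m + M) * |S (m + M) - α| ≤ ∑' m, c σ (m + M) * (ε / 3) := by
    refine Summable.tsum_le_tsum (fun m => ?_) htailsummable (hcshift.mul_right _)
    exact mul_le_mul_of_nonneg_left (hMabs (m + M) (by omega)) (hcnn σ hσ0.le _)
  have htail2 : ∑' m, c σ (m + M) * (ε / 3) = (∑' m, c σ (m + M)) * (ε / 3) := tsum_mul_right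
  have htail3 : ∑' m, c σ (m + M) ≤ 1 := by
    have hsplitc : ∑ m ∈ Finset.range M, c σ m + ∑' m, c σ (m + M) = 1 := by
      rw [Summable.sum_add_tsum_nat_add M hcs, (hc1 σ hσ0.le).tsum_eq]
    have : 0 ≤ ∑ m ∈ Finset.range M, c σ m :=
      Finset.sum_nonneg fun m _ => hcnn σ hσ0.le m
    linarith
  have htail4 : (∑' m, c σ (m + M) * |S (m + M) - α|) ≤ ε / 3 := by
    have h5 := mul_le_mul_of_nonneg_right htail3 hε3.le
    rw [one_mul] at h5
    calc (∑' m, c σ (m + M) * |S (m + M) - α|)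
        ≤ (∑' m, c σ (m + M) * (ε / 3)) := htail1
      _ = (∑' m, c σ (m + M)) * (ε / 3) := htail2
      _ ≤ ε / 3 := h5
  have := hb1.trans_eq hsplit
  linarith
end

section
/- For the two-sided geometric distribution $q_\sigma(k) = \frac{e^{1/\sigma}-1}{e^{1/\sigma}+1} e^{-|k|/\sigma}$ ($\sigma > 0$, $q_0$ the Kronecker delta), there exist $\epsilon > 0$ and $K \in \mathbb{N}$ such that for all $k$ with $|k| \ge K$, the map $\sigma \mapsto q_\sigma(k)$ is nondecreasing on $[0, \epsilon]$. -/
/-- The two-sided geometric distribution, extended by the Kronecker delta at `σ = 0`. -/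
noncomputable def twoSidedGeom (σ : ℝ) (k : ℤ) : ℝ :=
  if σ = 0 then (if k = 0 then 1 else 0)
  else (Real.exp (1/σ) - 1) / (Real.exp (1/σ) + 1) * Real.exp (-|(k : ℝ)| / σ)

lemma geomAux_hasDerivAt (n t : ℝ) :
    HasDerivAt (fun t => (Real.exp t - 1) / (Real.exp t + 1) * Real.exp (-n * t))
      (Real.exp (-n*t) / (Real.exp t + 1)^2 * (2*Real.exp t - n*((Real.exp t)^2 - 1))) t := by
  have hne : Real.exp t + 1 ≠ 0 := by positivity
  have h1 : HasDerivAt (fun t => Real.exp t - 1) (Real.exp t) t :=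
    (Real.hasDerivAt_exp t).sub_const 1
  have h2 : HasDerivAt (fun t => Real.exp t + 1) (Real.exp t) t :=
    (Real.hasDerivAt_exp t).add_const 1
  have hq := h1.div h2 hne
  have hl : HasDerivAt (fun t : ℝ => -n * t) (-n) t := by
    simpa using (hasDerivAt_id t).const_mul (-n)
  have he := hl.exp
  have := hq.mul he
  refine this.congr_deriv ?_
  simp only [Pi.div_apply]
  field_simp
  ring

lemma geomAux_antitone (n : ℝ) (hn : 1 ≤ n) :
    AntitoneOn (fun t => (Real.exp t - 1) / (Real.exp t + 1) * Real.exp (-n * t))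
      (Set.Ici (2:ℝ)) := by
  apply antitoneOn_of_deriv_nonpos (convex_Ici 2)
  · apply Continuous.continuousOn
    have hne : ∀ t : ℝ, Real.exp t + 1 ≠ 0 := fun t => by positivity
    exact ((Real.continuous_exp.sub continuous_const).div
      (Real.continuous_exp.add continuous_const) hne).mul
      (Real.continuous_exp.comp (continuous_const.mul continuous_id))
  · intro t ht
    exact (geomAux_hasDerivAt n t).differentiableAt.differentiableWithinAt
  · intro t ht
    rw [interior_Ici] at ht
    rw [(geomAux_hasDerivAt n t).deriv]
    have h2t : (2:ℝ) < t := ht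
    have h3 : (3:ℝ) ≤ Real.exp t := by
      have := Real.add_one_le_exp t; linarith
    have key : 2 * Real.exp t - n * ((Real.exp t)^2 - 1) ≤ 0 := by
      have hsq : 2*Real.exp t ≤ (Real.exp t)^2 - 1 := by nlinarith
      have hmul := mul_le_mul_of_nonneg_right hn
        (show (0:ℝ) ≤ (Real.exp t)^2 - 1 by linarith)
      rw [one_mul] at hmul
      linarith
    have hpos : (0:ℝ) ≤ Real.exp (-n*t) / (Real.exp t + 1)^2 := by positivity
    exact mul_nonpos_of_nonneg_of_nonpos hpos key

/-- Property P.5 (tail monotonicity) for the two-sided geometric family. -/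
theorem twoSidedGeom_tail_monotone :
    ∃ ε > (0:ℝ), ∃ K : ℕ, ∀ k : ℤ, (K : ℤ) ≤ |k| →
      MonotoneOn (fun σ => twoSidedGeom σ k) (Set.Icc 0 ε) := by
  refine ⟨1/2, by norm_num, 1, fun k hk => ?_⟩
  have hk0 : k ≠ 0 := by
    intro h; rw [h] at hk; simp at hk
  set n : ℝ := |(k : ℝ)| with hn
  have hn1 : 1 ≤ n := by
    rw [hn, ← Int.cast_abs]
    exact_mod_cast hk
  have hform : ∀ σ : ℝ, σ ≠ 0 → twoSidedGeom σ k =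
      (Real.exp (1/σ) - 1) / (Real.exp (1/σ) + 1) * Real.exp (-n * (1/σ)) := by
    intro σ hσ
    rw [twoSidedGeom, if_neg hσ]
    congr 1
    congr 1
    ring
  intro σ1 h1 σ2 h2 h12
  obtain ⟨h1l, h1r⟩ := h1
  obtain ⟨h2l, h2r⟩ := h2
  show twoSidedGeom σ1 k ≤ twoSidedGeom σ2 k
  rcases eq_or_lt_of_le h1l with h10 | h10
  · -- σ1 = 0
    have lhs0 : twoSidedGeom σ1 k = 0 := by
      rw [← h10]; simp [twoSidedGeom, hk0]
    have rhs0 : 0 ≤ twoSidedGeom σ2 k := by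
      rcases eq_or_lt_of_le h2l with h20 | h20
      · rw [← h20]; simp [twoSidedGeom, hk0]
      · rw [twoSidedGeom, if_neg (ne_of_gt h20)]
        have he1 : (1:ℝ) ≤ Real.exp (1/σ2) := Real.one_le_exp (by positivity)
        have hpos : (0:ℝ) < Real.exp (1/σ2) + 1 := by positivity
        exact mul_nonneg (div_nonneg (by linarith) (by linarith)) (Real.exp_pos _).le
    linarith
  · -- 0 < σ1 ≤ σ2
    have h20 : 0 < σ2 := lt_of_lt_of_le h10 h12
    rw [hform σ1 (ne_of_gt h10), hform σ2 (ne_of_gt h20)]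
    have ht1 : (2:ℝ) ≤ 1/σ1 := by
      rw [le_div_iff₀ h10]; linarith
    have ht2 : (2:ℝ) ≤ 1/σ2 := by
      rw [le_div_iff₀ h20]; linarith
    have hle : 1/σ2 ≤ 1/σ1 := one_div_le_one_div_of_le h10 h12
    exact geomAux_antitone n hn1 ht2 ht1 hle
end

section
/- Let $q_\sigma$ be a family of PMFs on $\mathbb{Z}$ satisfying the pooling PMF axioms P.3–P.5 (Kronecker delta at $\sigma = 0$; continuity in $\sigma$ at $\sigma = 0$ for each $k$; and there exist $\epsilon > 0$, $K$ such that $q_\sigma(k)$ is nondecreasing in $\sigma$ on $[0, \epsilon]$ for $|k| \ge K$). Let $(z_k)$ and $(\hat z_k)$ be sequences in $\mathbb{R}^d$, $d : \mathbb{R}^d \times \mathbb{R}^d \to [0, \infty)$ an arbitrary measurable cost, $p \ge 1$, and suppose $\sum_{k} q_\sigma(k) d^p(z_k, \hat z_k) < \infty$ for all $\sigma > 0$. Define $y_{0,\sigma} = \sum_k q_\sigma(k) \delta_{z_k}$ and $\hat y_{0,\sigma} = \sum_k q_\sigma(k) \delta_{\hat z_k}$, and $D_{0,\sigma} = W_p^p(y_{0,\sigma},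 \hat y_{0,\sigma})$ where $W_p^p(\rho, \hat\rho) = \inf_{\text{couplings}} \mathbb{E}[d^p(Z, \hat Z)]$. Then $\lim_{\sigma \to 0} D_{0,\sigma} = d^p(z_0, \hat z_0)$. -/
open MeasureTheory Filter

/-- The optimal transport cost between two measures for a given cost function. -/
noncomputable def transportCost {X : Type*} [MeasurableSpace X]
    (c : X → X → ENNReal) (ρ ρ' : Measure X) : ENNReal :=
  ⨅ π ∈ {π : Measure (X × X) | π.map Prod.fst = ρ ∧ π.map Prod.snd = ρ'},
    ∫⁻ p, c p.1 p.2 ∂π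

/-- Theorem 1: as `σ → 0`, Wasserstein distortion reduces to pure fidelity. -/
theorem wasserstein_distortion_fidelity {n : ℕ}
    (q : ℝ → ℤ → ℝ)
    (hq_nonneg : ∀ σ ≥ (0:ℝ), ∀ k : ℤ, 0 ≤ q σ k)
    (hq_pmf : ∀ σ ≥ (0:ℝ), HasSum (q σ) 1)
    (hP3 : ∀ k : ℤ, q 0 k = if k = 0 then 1 else 0)
    (hP4 : ∀ k : ℤ, Tendsto (fun σ => q σ k) (nhdsWithin 0 (Set.Ici 0)) (nhds (q 0 k)))
    (hP5 : ∃ ε > (0:ℝ), ∃ K : ℕ, ∀ k : ℤ, (K : ℤ) ≤ |k| →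
      MonotoneOn (fun σ => q σ k) (Set.Icc 0 ε))
    (z zh : ℤ → (Fin n → ℝ))
    (d : (Fin n → ℝ) → (Fin n → ℝ) → ℝ)
    (hd_nonneg : ∀ x y, 0 ≤ d x y)
    (hd_meas : Measurable (fun pr : (Fin n → ℝ) × (Fin n → ℝ) => d pr.1 pr.2))
    (p : ℝ) (hp : 1 ≤ p)
    (hsum : ∀ σ > (0:ℝ), Summable (fun k : ℤ => q σ k * d (z k) (zh k) ^ p)) :
    Tendsto
      (fun σ : ℝ => transportCost (fun a b => ENNReal.ofReal (d a b ^ p))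
        (Measure.sum (fun k : ℤ => ENNReal.ofReal (q σ k) • Measure.dirac (z k)))
        (Measure.sum (fun k : ℤ => ENNReal.ofReal (q σ k) • Measure.dirac (zh k))))
      (nhdsWithin 0 (Set.Ioi 0))
      (nhds (ENNReal.ofReal (d (z 0) (zh 0) ^ p))) := by
  obtain ⟨ε, hε, K, hK⟩ := hP5
  set c : ℤ → ℝ := fun k => d (z k) (zh k) ^ p with hc_def
  have hc_nonneg : ∀ k, 0 ≤ c k := fun k => Real.rpow_nonneg (hd_nonneg _ _) p
  have hq_le_one : ∀ σ ≥ (0:ℝ), ∀ k, q σ k ≤ 1 := fun σ hσ k =>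
    le_hasSum (hq_pmf σ hσ) k (fun j _ => hq_nonneg σ hσ j)
  -- measurability of the cost
  have hC_meas : Measurable (fun pr : (Fin n → ℝ) × (Fin n → ℝ) =>
      ENNReal.ofReal (d pr.1 pr.2 ^ p)) := by
    exact ((Real.continuous_rpow_const (le_trans zero_le_one hp)).measurable.comp
      hd_meas).ennreal_ofReal
  -- the measures
  set μ : ℝ → Measure (Fin n → ℝ) :=
    fun σ => Measure.sum (fun k : ℤ => ENNReal.ofReal (q σ k) • Measure.dirac (z k)) with hμ_def
  set ν : ℝ → Measure (Fin n → ℝ) :=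
    fun σ => Measure.sum (fun k : ℤ => ENNReal.ofReal (q σ k) • Measure.dirac (zh k)) with hν_def
  have hν_univ : ∀ σ ≥ (0:ℝ), ν σ Set.univ = 1 := by
    intro σ hσ
    rw [hν_def]
    rw [Measure.sum_apply _ MeasurableSet.univ]
    simp only [Measure.smul_apply, measure_univ, smul_eq_mul, mul_one]
    rw [← ENNReal.ofReal_tsum_of_nonneg (hq_nonneg σ hσ) (hq_pmf σ hσ).summable,
      (hq_pmf σ hσ).tsum_eq, ENNReal.ofReal_one]
  have hμ_z0 : ∀ σ, ENNReal.ofReal (q σ 0) ≤ μ σ {z 0} := by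
    intro σ
    rw [hμ_def, Measure.sum_apply _ (measurableSet_singleton _)]
    refine le_trans ?_ (ENNReal.le_tsum 0)
    simp [Measure.dirac_apply_of_mem]
  have hν_z0 : ∀ σ, ENNReal.ofReal (q σ 0) ≤ ν σ {zh 0} := by
    intro σ
    rw [hν_def, Measure.sum_apply _ (measurableSet_singleton _)]
    refine le_trans ?_ (ENNReal.le_tsum 0)
    simp [Measure.dirac_apply_of_mem]
  -- lower bound on the transport cost
  have hlow : ∀ σ ≥ (0:ℝ),
      ENNReal.ofReal (c 0) * ENNReal.ofReal (2 * q σ 0 - 1) ≤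
        transportCost (fun a b => ENNReal.ofReal (d a b ^ p)) (μ σ) (ν σ) := by
    intro σ hσ
    refine le_iInf₂ fun π hπ => ?_
    obtain ⟨hπ1, hπ2⟩ := hπ
    set S : Set ((Fin n → ℝ) × (Fin n → ℝ)) := {z 0} ×ˢ {zh 0} with hS_def
    have hS_meas : MeasurableSet S :=
      (measurableSet_singleton _).prod (measurableSet_singleton _)
    have hπ_fst : π ({z 0} ×ˢ (Set.univ : Set (Fin n → ℝ))) = μ σ {z 0} := by
      rw [← hπ1, Measure.map_apply measurable_fst (measurableSet_singleton _)]
      congr 1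
      ext pr
      simp only [Set.mem_preimage, Set.mem_singleton_iff, Set.mem_prod, Set.mem_univ, and_true]
    have hπ_snd : π ((Set.univ : Set (Fin n → ℝ)) ×ˢ ({zh 0}ᶜ)) = ν σ ({zh 0}ᶜ) := by
      rw [← hπ2, Measure.map_apply measurable_snd (measurableSet_singleton _).compl]
      congr 1
      ext pr
      simp only [Set.mem_preimage, Set.mem_compl_iff, Set.mem_singleton_iff, Set.mem_prod,
        Set.mem_univ, true_and]
    have hν_fin : ν σ {zh 0} ≠ ⊤ := by
      refine ne_top_of_le_ne_top ?_ (measure_mono (Set.subset_univ _))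
      rw [hν_univ σ hσ]
      exact ENNReal.one_ne_top
    have hν_compl : ν σ ({zh 0}ᶜ) ≤ 1 - ENNReal.ofReal (q σ 0) := by
      rw [measure_compl (measurableSet_singleton _) hν_fin, hν_univ σ hσ]
      exact tsub_le_tsub le_rfl (hν_z0 σ)
    have hsub : ({z 0} ×ˢ (Set.univ : Set (Fin n → ℝ))) ⊆
        S ∪ (Set.univ : Set (Fin n → ℝ)) ×ˢ ({zh 0}ᶜ) := by
      rintro ⟨a, b⟩ ⟨ha, -⟩
      rcases eq_or_ne b (zh 0) with hb | hb
      · exact Or.inl ⟨ha, hb⟩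
      · exact Or.inr ⟨trivial, hb⟩
    have key : ENNReal.ofReal (2 * q σ 0 - 1) ≤ π S := by
      have hq0le : q σ 0 ≤ 1 := hq_le_one σ hσ 0
      have hq0ge : (0:ℝ) ≤ q σ 0 := hq_nonneg σ hσ 0
      rw [show (2 * q σ 0 - 1) = q σ 0 - (1 - q σ 0) by ring,
        ENNReal.ofReal_sub _ (by linarith)]
      refine tsub_le_iff_right.2 ?_
      calc ENNReal.ofReal (q σ 0) ≤ μ σ {z 0} := hμ_z0 σ
        _ = π ({z 0} ×ˢ (Set.univ : Set (Fin n → ℝ))) := hπ_fst.symm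
        _ ≤ π (S ∪ (Set.univ : Set (Fin n → ℝ)) ×ˢ ({zh 0}ᶜ)) := measure_mono hsub
        _ ≤ π S + π ((Set.univ : Set (Fin n → ℝ)) ×ˢ ({zh 0}ᶜ)) := measure_union_le _ _
        _ ≤ π S + (1 - ENNReal.ofReal (q σ 0)) := by
            rw [hπ_snd]
            exact add_le_add le_rfl hν_compl
        _ = π S + ENNReal.ofReal (1 - q σ 0) := by
            rw [ENNReal.ofReal_sub _ hq0ge, ENNReal.ofReal_one]
    calc ENNReal.ofReal (c 0) * ENNReal.ofReal (2 * q σ 0 - 1)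
        ≤ ENNReal.ofReal (c 0) * π S := mul_le_mul_right key _
      _ = ∫⁻ _ in S, ENNReal.ofReal (c 0) ∂π := (setLIntegral_const S _).symm
      _ = ∫⁻ pr in S, ENNReal.ofReal (d pr.1 pr.2 ^ p) ∂π := by
          refine setLIntegral_congr_fun hS_meas (fun pr hpr => ?_)
          show ENNReal.ofReal (c 0) = ENNReal.ofReal (d pr.1 pr.2 ^ p)
          obtain ⟨h1, h2⟩ := hpr
          simp only [Set.mem_singleton_iff] at h1 h2
          rw [h1, h2]
      _ ≤ ∫⁻ pr, ENNReal.ofReal (d pr.1 pr.2 ^ p) ∂π := setLIntegral_le_lintegral S _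
  -- upper bound on the transport cost
  have hub : ∀ σ > (0:ℝ),
      transportCost (fun a b => ENNReal.ofReal (d a b ^ p)) (μ σ) (ν σ) ≤
        ENNReal.ofReal (∑' k : ℤ, q σ k * c k) := by
    intro σ hσ
    set π : Measure ((Fin n → ℝ) × (Fin n → ℝ)) :=
      Measure.sum (fun k : ℤ => ENNReal.ofReal (q σ k) • Measure.dirac (z k, zh k)) with hπ_def
    have h1 : π.map Prod.fst = μ σ := by
      rw [hπ_def, Measure.map_sum measurable_fst.aemeasurable, hμ_def]
      congr 1
      funext k
      rw [Measure.map_smul, Measure.map_dirac' measurable_fst]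
    have h2 : π.map Prod.snd = ν σ := by
      rw [hπ_def, Measure.map_sum measurable_snd.aemeasurable, hν_def]
      congr 1
      funext k
      rw [Measure.map_smul, Measure.map_dirac' measurable_snd]
    refine le_trans (iInf₂_le π ⟨h1, h2⟩) ?_
    rw [hπ_def, lintegral_sum_measure,
      ENNReal.ofReal_tsum_of_nonneg
        (fun k => mul_nonneg (hq_nonneg σ hσ.le k) (hc_nonneg k)) (hsum σ hσ)]
    refine le_of_eq (tsum_congr fun k => ?_)
    rw [lintegral_smul_measure, lintegral_dirac' _ hC_meas,
      ENNReal.ofReal_mul (hq_nonneg σ hσ.le k)]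
    rfl
  -- convergence of `q σ 0` to 1
  have hq0_tendsto : Tendsto (fun σ => q σ 0) (nhdsWithin 0 (Set.Ioi 0)) (nhds 1) := by
    have h := (hP4 0).mono_left (nhdsWithin_mono _ Set.Ioi_subset_Ici_self)
    rw [hP3 0] at h
    simpa using h
  -- lower bound tendsto
  have hlow_tendsto : Tendsto
      (fun σ => ENNReal.ofReal (c 0) * ENNReal.ofReal (2 * q σ 0 - 1))
      (nhdsWithin 0 (Set.Ioi 0)) (nhds (ENNReal.ofReal (c 0))) := by
    have hr : Tendsto (fun σ => 2 * q σ 0 - 1) (nhdsWithin 0 (Set.Ioi 0)) (nhds 1) := by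
      have h := (hq0_tendsto.const_mul 2).sub_const 1
      norm_num at h
      exact h
    have h2 : Tendsto (fun σ => ENNReal.ofReal (2 * q σ 0 - 1))
        (nhdsWithin 0 (Set.Ioi 0)) (nhds 1) := by
      have := (ENNReal.continuous_ofReal.tendsto 1).comp hr
      simpa [Function.comp_def] using this
    have := ENNReal.Tendsto.const_mul (a := ENNReal.ofReal (c 0)) h2 (Or.inl one_ne_zero)
    simpa using this
  -- upper bound tendsto (dominated convergence for the series)
  have htsum_tendsto : Tendsto (fun σ => ∑' k : ℤ, q σ k * c k)
      (nhdsWithin 0 (Set.Ioi 0)) (nhds (c 0)) := by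
    have hg : (∑' k : ℤ, q 0 k * c k) = c 0 := by
      have heq : (fun k : ℤ => q 0 k * c k) = fun k : ℤ => if k = 0 then c 0 else 0 := by
        funext k
        rw [hP3 k]
        split_ifs with h
        · subst h; simp
        · simp
      rw [heq, tsum_ite_eq]
    rw [← hg]
    refine tendsto_tsum_of_dominated_convergence
      (bound := fun k : ℤ => (if |k| < (K:ℤ) + 1 then c k else 0) + q ε k * c k) ?_ ?_ ?_
    · refine Summable.add ?_ (hsum ε hε)
      refine summable_of_ne_finset_zero (s := Finset.Icc (-(K:ℤ) - 1) ((K:ℤ) + 1))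
        fun k hk => ?_
      rw [Finset.mem_Icc] at hk
      push_neg at hk
      have habs : (K:ℤ) + 1 ≤ |k| := by
        rw [le_abs]
        omega
      rw [if_neg (not_lt.2 habs)]
    · intro k
      exact ((hP4 k).mono_left (nhdsWithin_mono _ Set.Ioi_subset_Ici_self)).mul_const (c k)
    · filter_upwards [Ioc_mem_nhdsGT_of_mem (Set.left_mem_Ico.2 hε)] with σ hσ k
      rw [Real.norm_eq_abs,
        abs_of_nonneg (mul_nonneg (hq_nonneg σ hσ.1.le k) (hc_nonneg k))]
      by_cases hk : (K:ℤ) + 1 ≤ |k|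
      · have hmono := hK k (le_trans (by omega) hk)
        have hle : q σ k ≤ q ε k :=
          hmono ⟨hσ.1.le, hσ.2⟩ ⟨hε.le, le_refl ε⟩ hσ.2
        have h0 : (0:ℝ) ≤ (if |k| < (K:ℤ) + 1 then c k else 0) := by
          split_ifs
          · exact hc_nonneg k
          · exact le_refl 0
        have := mul_le_mul_of_nonneg_right hle (hc_nonneg k)
        linarith
      · rw [if_pos (not_le.1 hk)]
        have h1 : q σ k * c k ≤ c k := by
          have := mul_le_mul_of_nonneg_right (hq_le_one σ hσ.1.le k) (hc_nonneg k)
          simpa using this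
        have h2 : (0:ℝ) ≤ q ε k * c k := mul_nonneg (hq_nonneg ε hε.le k) (hc_nonneg k)
        linarith
  have hub_tendsto : Tendsto (fun σ => ENNReal.ofReal (∑' k : ℤ, q σ k * c k))
      (nhdsWithin 0 (Set.Ioi 0)) (nhds (ENNReal.ofReal (c 0))) :=
    (ENNReal.continuous_ofReal.tendsto _).comp htsum_tendsto
  -- squeeze
  refine tendsto_of_tendsto_of_tendsto_of_le_of_le' hlow_tendsto hub_tendsto ?_ ?_
  · filter_upwards [self_mem_nhdsWithin] with σ hσ
    exact hlow σ (le_of_lt hσ)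
  · filter_upwards [self_mem_nhdsWithin] with σ hσ
    exact hub σ hσ
end

section
/- Let $q$ be a PMF on $\mathbb{Z}$, $(z_k), (\hat z_k)$ sequences in a space $X$ with cost $d^p : X \times X \to [0,\infty)$. Define $\rho = \sum_k q(k)\delta_{z_k}$, $\hat\rho = \sum_k q(k)\delta_{\hat z_k}$. Then for any coupling of $\rho$ and $\hat\rho$, $\mathbb{E}[d^p(Z, \hat Z)] \ge (2q(0) - 1)\, d^p(z_0, \hat z_0)$, provided the points $(z_k)$ are distinct and $(\hat z_k)$ are distinct. Consequently $\inf_{\text{couplings}} \mathbb{E}[d^p(Z, \hat Z)] \ge (2q(0)-1) d^p(z_0, \hat z_0)$. -/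
open MeasureTheory

lemma atom_mass {X : Type*} [MeasurableSpace X] [MeasurableSingletonClass X]
    (q : ℤ → ℝ) (z : ℤ → X) (hz : Function.Injective z) :
    (Measure.sum fun k : ℤ => ENNReal.ofReal (q k) • Measure.dirac (z k)) {z 0}
      = ENNReal.ofReal (q 0) := by
  rw [Measure.sum_apply _ (measurableSet_singleton _)]
  have : ∀ k : ℤ, (ENNReal.ofReal (q k) • Measure.dirac (z k)) {z 0}
      = if k = 0 then ENNReal.ofReal (q k) else 0 := by
    intro k
    rw [Measure.smul_apply, smul_eq_mul, Measure.dirac_apply]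
    by_cases h : k = 0
    · simp [h]
    · have : z k ≠ z 0 := fun he => h (hz he)
      simp [this, h]
  simp_rw [this]
  exact tsum_eq_single (0 : ℤ) (fun b hb => if_neg hb)

lemma total_mass {X : Type*} [MeasurableSpace X]
    (q : ℤ → ℝ) (hq_nonneg : ∀ k : ℤ, 0 ≤ q k) (hq_pmf : HasSum q 1) (z : ℤ → X) :
    (Measure.sum fun k : ℤ => ENNReal.ofReal (q k) • Measure.dirac (z k)) Set.univ = 1 := by
  rw [Measure.sum_apply _ MeasurableSet.univ]
  have : ∀ k : ℤ, (ENNReal.ofReal (q k) • Measure.dirac (z k)) Set.univ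
      = ENNReal.ofReal (q k) := by intro k; simp
  simp_rw [this]
  rw [← ENNReal.ofReal_tsum_of_nonneg hq_nonneg hq_pmf.summable, hq_pmf.tsum_eq]
  simp

/-- Lower bound on the transport cost between pooled discrete measures via the mass that
any coupling must place on the pair `(z 0, zh 0)`. -/
theorem transport_lower_bound {X : Type*} [MeasurableSpace X] [MeasurableSingletonClass X]
    (q : ℤ → ℝ)
    (hq_nonneg : ∀ k : ℤ, 0 ≤ q k)
    (hq_pmf : HasSum q 1)
    (z zh : ℤ → X)
    (hz_inj : Function.Injective z) (hzh_inj : Function.Injective zh)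
    (dp : X → X → ℝ)
    (hdp_nonneg : ∀ x y, 0 ≤ dp x y)
    (hdp_meas : Measurable (fun pr : X × X => dp pr.1 pr.2)) :
    (∀ π : Measure (X × X),
      π.map Prod.fst = Measure.sum (fun k : ℤ => ENNReal.ofReal (q k) • Measure.dirac (z k)) →
      π.map Prod.snd = Measure.sum (fun k : ℤ => ENNReal.ofReal (q k) • Measure.dirac (zh k)) →
      ENNReal.ofReal ((2 * q 0 - 1) * dp (z 0) (zh 0)) ≤ ∫⁻ pr, ENNReal.ofReal (dp pr.1 pr.2) ∂π) ∧
    ENNReal.ofReal ((2 * q 0 - 1) * dp (z 0) (zh 0)) ≤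
      transportCost (fun a b => ENNReal.ofReal (dp a b))
        (Measure.sum (fun k : ℤ => ENNReal.ofReal (q k) • Measure.dirac (z k)))
        (Measure.sum (fun k : ℤ => ENNReal.ofReal (q k) • Measure.dirac (zh k))) := by
  have main : ∀ π : Measure (X × X),
      π.map Prod.fst = Measure.sum (fun k : ℤ => ENNReal.ofReal (q k) • Measure.dirac (z k)) →
      π.map Prod.snd = Measure.sum (fun k : ℤ => ENNReal.ofReal (q k) • Measure.dirac (zh k)) →
      ENNReal.ofReal ((2 * q 0 - 1) * dp (z 0) (zh 0)) ≤
        ∫⁻ pr, ENNReal.ofReal (dp pr.1 pr.2) ∂π := by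
    intro π h1 h2
    have hA : π (Prod.fst ⁻¹' {z 0}) = ENNReal.ofReal (q 0) := by
      rw [← Measure.map_apply measurable_fst (measurableSet_singleton _), h1,
        atom_mass q z hz_inj]
    have hB : π (Prod.snd ⁻¹' {zh 0}) = ENNReal.ofReal (q 0) := by
      rw [← Measure.map_apply measurable_snd (measurableSet_singleton _), h2,
        atom_mass q zh hzh_inj]
    have huniv : π Set.univ = 1 := by
      have := congrArg (fun μ : Measure X => μ Set.univ) h1
      simp only [Measure.map_apply measurable_fst MeasurableSet.univ, Set.preimage_univ] at this
      rw [this, total_mass q hq_nonneg hq_pmf z]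
    have hinter : (Prod.fst ⁻¹' {z 0}) ∩ (Prod.snd ⁻¹' {zh 0})
        = ({(z 0, zh 0)} : Set (X × X)) := by
      ext pr
      simp [Set.mem_singleton_iff, Prod.ext_iff]
    have hpt : ENNReal.ofReal (2 * q 0 - 1) ≤ π {(z 0, zh 0)} := by
      by_cases hq0 : 0 ≤ 2 * q 0 - 1
      · have key : π (Prod.fst ⁻¹' {z 0}) + π (Prod.snd ⁻¹' {zh 0})
            ≤ 1 + π {(z 0, zh 0)} := by
          rw [← hinter, ← measure_union_add_inter _ (measurable_snd (measurableSet_singleton _))]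
          gcongr
          exact huniv ▸ measure_mono (Set.subset_univ _)
        rw [hA, hB] at key
        have h2q : ENNReal.ofReal (2 * q 0 - 1) + 1
            = ENNReal.ofReal (q 0) + ENNReal.ofReal (q 0) := by
          rw [← ENNReal.ofReal_one, ← ENNReal.ofReal_add hq0 zero_le_one,
            ← ENNReal.ofReal_add (hq_nonneg 0) (hq_nonneg 0)]
          ring_nf
        have : ENNReal.ofReal (2 * q 0 - 1) + 1 ≤ π {(z 0, zh 0)} + 1 := by
          rw [h2q]
          calc ENNReal.ofReal (q 0) + ENNReal.ofReal (q 0) ≤ 1 + π {(z 0, zh 0)} := key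
            _ = π {(z 0, zh 0)} + 1 := add_comm _ _
        exact (ENNReal.add_le_add_iff_right ENNReal.one_ne_top).mp this
      · rw [ENNReal.ofReal_eq_zero.2 (le_of_not_ge hq0)]
        exact zero_le
    calc ENNReal.ofReal ((2 * q 0 - 1) * dp (z 0) (zh 0))
        ≤ ENNReal.ofReal (dp (z 0) (zh 0)) * ENNReal.ofReal (2 * q 0 - 1) := by
          by_cases hq0 : 0 ≤ 2 * q 0 - 1
          · rw [← ENNReal.ofReal_mul (hdp_nonneg _ _), mul_comm]
          · rw [ENNReal.ofReal_eq_zero.2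
              (mul_nonpos_of_nonpos_of_nonneg (le_of_not_ge hq0) (hdp_nonneg _ _))]
            exact zero_le
      _ ≤ ENNReal.ofReal (dp (z 0) (zh 0)) * π {(z 0, zh 0)} := by
          exact mul_le_mul_right hpt _
      _ = ∫⁻ pr in {(z 0, zh 0)}, ENNReal.ofReal (dp pr.1 pr.2) ∂π := by
          rw [lintegral_singleton]
      _ ≤ ∫⁻ pr, ENNReal.ofReal (dp pr.1 pr.2) ∂π := setLIntegral_le_lintegral _ _
  refine ⟨main, ?_⟩
  exact le_iInf fun π => le_iInf fun hπ => main π hπ.1 hπ.2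
end

section
/- Let $q_\sigma$ be a pooling PMF family on $\mathbb{Z}$ satisfying symmetry, monotonicity in $|k|$, and pointwise vanishing as $\sigma \to \infty$. Let $(z_k)$ be a sequence in a Polish metric space whose empirical measures $F_N = \frac{1}{2N+1}\sum_{k=-N}^N \delta_{z_k}$ converge weakly to a law $F$. Suppose also $\sum_k q_\sigma(k)\, f(z_k) < \infty$ for each $\sigma > 0$ and each bounded continuous $f \ge 0$ (automatic), i.e., the pooled measures $F_\sigma = \sum_k q_\sigma(k) \delta_{z_k}$ are well-defined. Then $F_\sigma \to F$ weakly as $\sigma \to \infty$. -/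
open MeasureTheory Filter Finset

namespace PooledWeak

noncomputable def cc (p : ℤ → ℝ) (N : ℕ) : ℝ := p (N : ℤ) - p ((N + 1 : ℕ) : ℤ)

variable {p : ℤ → ℝ}

lemma cc_nonneg (hmono : ∀ k k' : ℤ, |k| ≤ |k'| → p k' ≤ p k) (N : ℕ) : 0 ≤ cc p N := by
  have h := hmono (N : ℤ) ((N + 1 : ℕ) : ℤ) (by
    rw [Int.abs_eq_natAbs, Int.abs_eq_natAbs]; omega)
  simpa [cc] using sub_nonneg.mpr h

lemma cc_le (hnn : ∀ k, 0 ≤ p k) (N : ℕ) : cc p N ≤ p (N : ℤ) := by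
  have := hnn ((N + 1 : ℕ) : ℤ); simp only [cc]; linarith

lemma p_abs (hsymm : ∀ k : ℤ, p k = p (-k)) (k : ℤ) : p (k.natAbs : ℤ) = p k := by
  have h : (k.natAbs : ℤ) = k ∨ (k.natAbs : ℤ) = -k := by omega
  rcases h with h | h
  · rw [h]
  · rw [h, ← hsymm]

lemma summable_nat (hsum : Summable p) : Summable (fun N : ℕ => p (N : ℤ)) :=
  hsum.comp_injective (fun a b h => by exact_mod_cast h)

lemma cc_summable (hsum : Summable p) : Summable (cc p) := by
  have hps := summable_nat hsum
  exact hps.sub ((summable_nat_add_iff 1).mpr hps)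

lemma tail_hasSum (hsum : Summable p) (m : ℕ) :
    HasSum (fun i : ℕ => cc p (m + i)) (p (m : ℤ)) := by
  have hps := summable_nat hsum
  have hcs : Summable (fun i : ℕ => cc p (m + i)) :=
    ((summable_nat_add_iff m).mpr (cc_summable hsum)).congr (fun i => by rw [Nat.add_comm])
  have htel : ∀ n : ℕ, ∑ i ∈ range n, cc p (m + i) = p (m : ℤ) - p ((m + n : ℕ) : ℤ) := by
    intro n
    have h := Finset.sum_range_sub' (f := fun i : ℕ => p ((m + i : ℕ) : ℤ)) n
    simp only [Nat.add_zero] at h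
    rw [← h]
    exact Finset.sum_congr rfl fun i _ => rfl
  have hlim : Tendsto (fun n : ℕ => ∑ i ∈ range n, cc p (m + i)) atTop (nhds (p (m : ℤ))) := by
    have h0 : Tendsto (fun n : ℕ => p ((m + n : ℕ) : ℤ)) atTop (nhds 0) :=
      (hps.tendsto_atTop_zero.comp (tendsto_add_atTop_nat m)).congr
        (fun n => by simp [Nat.add_comm])
    have h1 := tendsto_const_nhds (x := p (m : ℤ)) (f := atTop (α := ℕ)) |>.sub h0
    simpa [htel] using h1
  have h2 := hcs.hasSum
  rwa [tendsto_nhds_unique h2.tendsto_sum_nat hlim] at h2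

lemma indic_hasSum (hsum : Summable p) (hsymm : ∀ k : ℤ, p k = p (-k)) (k : ℤ) :
    HasSum (fun N : ℕ => if k.natAbs ≤ N then cc p N else 0) (p k) := by
  set m := k.natAbs with hm
  have h := tail_hasSum hsum m
  rw [p_abs hsymm k] at h
  have hinj : Function.Injective (fun i : ℕ => m + i) := add_right_injective m
  have hzero : ∀ N ∉ Set.range (fun i : ℕ => m + i),
      (if m ≤ N then cc p N else 0) = 0 := by
    intro N hN
    rw [if_neg]
    intro hle
    exact hN ⟨N - m, show m + (N - m) = N by omega⟩
  rw [← Function.Injective.hasSum_iff hinj hzero]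
  have heq : ((fun N => if m ≤ N then cc p N else 0) ∘ fun i : ℕ => m + i)
      = fun i : ℕ => cc p (m + i) := by
    funext i; simp [Function.comp]
  rw [heq]
  exact h

lemma card_Icc_int (N : ℕ) : (Finset.Icc (-(N:ℤ)) (N:ℤ)).card = 2 * N + 1 := by
  rw [Int.card_Icc]; omega

lemma partial_eq (hsymm : ∀ k : ℤ, p k = p (-k)) (n : ℕ) :
    ∑ N ∈ range n, (2*(N:ℝ)+1) * cc p N
      = (∑ k ∈ Finset.Icc (-(n:ℤ)) (n:ℤ), p k) - (2*(n:ℝ)+1) * p (n : ℤ) := by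
  induction n with
  | zero => simp
  | succ n ih =>
    rw [Finset.sum_range_succ, ih]
    have hins : Finset.Icc (-((n+1:ℕ)):ℤ) ((n+1:ℕ):ℤ)
        = insert (-((n+1:ℕ)):ℤ) (insert ((n+1:ℕ):ℤ) (Finset.Icc (-(n:ℤ)) (n:ℤ))) := by
      ext x
      simp only [Finset.mem_Icc, Finset.mem_insert]
      omega
    have h1 : (-((n+1:ℕ)):ℤ) ∉ insert ((n+1:ℕ):ℤ) (Finset.Icc (-(n:ℤ)) (n:ℤ)) := by
      simp only [Finset.mem_insert, Finset.mem_Icc]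
      omega
    have h2 : ((n+1:ℕ):ℤ) ∉ Finset.Icc (-(n:ℤ)) (n:ℤ) := by
      simp only [Finset.mem_Icc]; omega
    rw [hins, Finset.sum_insert h1, Finset.sum_insert h2]
    have hsymm' : p (-((n:ℤ)+1)) = p ((n:ℤ)+1) := by rw [← hsymm]
    simp only [cc]
    push_cast
    rw [hsymm']
    ring

lemma w_summable (hnn : ∀ k, 0 ≤ p k) (hsum : HasSum p 1)
    (hsymm : ∀ k : ℤ, p k = p (-k)) (hmono : ∀ k k' : ℤ, |k| ≤ |k'| → p k' ≤ p k) :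
    Summable (fun N : ℕ => (2*(N:ℝ)+1) * cc p N) ∧
      ∑' N : ℕ, (2*(N:ℝ)+1) * cc p N ≤ 1 := by
  have hwnn : ∀ N : ℕ, 0 ≤ (2*(N:ℝ)+1) * cc p N := fun N =>
    mul_nonneg (by positivity) (cc_nonneg hmono N)
  have hbd : ∀ n : ℕ, ∑ N ∈ range n, (2*(N:ℝ)+1) * cc p N ≤ 1 := by
    intro n
    rw [partial_eq hsymm n]
    have h1 : ∑ k ∈ Finset.Icc (-(n:ℤ)) (n:ℤ), p k ≤ 1 :=
      sum_le_hasSum _ (fun i _ => hnn i) hsum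
    have h2 : 0 ≤ (2*(n:ℝ)+1) * p (n : ℤ) := mul_nonneg (by positivity) (hnn _)
    linarith
  exact ⟨summable_of_sum_range_le hwnn hbd,
    Summable.tsum_le_of_sum_range_le (summable_of_sum_range_le hwnn hbd) hbd⟩

lemma fubini (hnn : ∀ k, 0 ≤ p k) (hsum : HasSum p 1)
    (hsymm : ∀ k : ℤ, p k = p (-k)) (hmono : ∀ k k' : ℤ, |k| ≤ |k'| → p k' ≤ p k)
    (a : ℤ → ℝ) (C : ℝ) (ha0 : ∀ k, 0 ≤ a k) (haC : ∀ k, a k ≤ C) :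
    Summable (fun N : ℕ => cc p N * ∑ k ∈ Finset.Icc (-(N:ℤ)) (N:ℤ), a k) ∧
    ∑' k : ℤ, p k * a k = ∑' N : ℕ, cc p N * ∑ k ∈ Finset.Icc (-(N:ℤ)) (N:ℤ), a k := by
  have hC : 0 ≤ C := le_trans (ha0 0) (haC 0)
  set g : ℕ → ℤ → ℝ := fun N k => (if k.natAbs ≤ N then cc p N else 0) * a k with hg
  have hmem : ∀ (N : ℕ) (k : ℤ), k ∈ Finset.Icc (-(N:ℤ)) (N:ℤ) ↔ k.natAbs ≤ N := by
    intro N k; simp only [Finset.mem_Icc]; omega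
  have hzero : ∀ (N : ℕ), ∀ k ∉ Finset.Icc (-(N:ℤ)) (N:ℤ), g N k = 0 := by
    intro N k hk
    rw [hg]
    simp only
    rw [if_neg, zero_mul]
    rw [hmem] at hk
    exact hk
  have hrow : ∀ N : ℕ, ∑' k : ℤ, g N k = cc p N * ∑ k ∈ Finset.Icc (-(N:ℤ)) (N:ℤ), a k := by
    intro N
    rw [tsum_eq_sum (hzero N), Finset.mul_sum]
    refine Finset.sum_congr rfl fun k hk => ?_
    rw [hg]; simp only
    rw [if_pos ((hmem N k).mp hk)]
  have hrow_summable : ∀ N : ℕ, Summable (fun k => g N k) := fun N =>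
    summable_of_ne_finset_zero (hzero N)
  have hT0 : ∀ N : ℕ, 0 ≤ ∑ k ∈ Finset.Icc (-(N:ℤ)) (N:ℤ), a k := fun N =>
    Finset.sum_nonneg fun k _ => ha0 k
  have hTC : ∀ N : ℕ, ∑ k ∈ Finset.Icc (-(N:ℤ)) (N:ℤ), a k ≤ (2*(N:ℝ)+1) * C := by
    intro N
    have := Finset.sum_le_card_nsmul (Finset.Icc (-(N:ℤ)) (N:ℤ)) a C (fun k _ => haC k)
    rw [card_Icc_int N, nsmul_eq_mul] at this
    calc ∑ k ∈ Finset.Icc (-(N:ℤ)) (N:ℤ), a k ≤ ((2*N+1 : ℕ) : ℝ) * C := this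
      _ = (2*(N:ℝ)+1) * C := by push_cast; ring
  have hcol_summable : Summable (fun N : ℕ => ∑' k : ℤ, g N k) := by
    refine Summable.of_nonneg_of_le (fun N => ?_) (fun N => ?_)
      ((w_summable hnn hsum hsymm hmono).1.mul_right C)
    · rw [hrow N]; exact mul_nonneg (cc_nonneg hmono N) (hT0 N)
    · rw [hrow N]
      calc cc p N * ∑ k ∈ Finset.Icc (-(N:ℤ)) (N:ℤ), a k
          ≤ cc p N * ((2*(N:ℝ)+1) * C) :=
            mul_le_mul_of_nonneg_left (hTC N) (cc_nonneg hmono N)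
        _ = (2*(N:ℝ)+1) * cc p N * C := by ring
  have hg_nonneg : ∀ x : ℕ × ℤ, 0 ≤ g x.1 x.2 := by
    rintro ⟨N, k⟩
    rw [hg]; simp only
    rcases le_or_gt k.natAbs N with h | h
    · rw [if_pos h]; exact mul_nonneg (cc_nonneg hmono N) (ha0 k)
    · rw [if_neg (not_le.mpr h), zero_mul]
  have huncurry : Summable (Function.uncurry fun N k => g N k) :=
    (summable_prod_of_nonneg hg_nonneg).mpr ⟨hrow_summable, hcol_summable⟩
  have hcol : ∀ k : ℤ, HasSum (fun N : ℕ => g N k) (p k * a k) := fun k =>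
    (indic_hasSum hsum.summable hsymm k).mul_right (a k)
  constructor
  · exact hcol_summable.congr fun N => hrow N
  · calc ∑' k : ℤ, p k * a k = ∑' (k : ℤ) (N : ℕ), g N k := by
          refine tsum_congr fun k => ?_
          exact (hcol k).tsum_eq.symm
      _ = ∑' (N : ℕ) (k : ℤ), g N k := Summable.tsum_comm huncurry
      _ = ∑' N : ℕ, cc p N * ∑ k ∈ Finset.Icc (-(N:ℤ)) (N:ℤ), a k :=
          tsum_congr fun N => hrow N

lemma w_hasSum_one (hnn : ∀ k, 0 ≤ p k) (hsum : HasSum p 1)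
    (hsymm : ∀ k : ℤ, p k = p (-k)) (hmono : ∀ k k' : ℤ, |k| ≤ |k'| → p k' ≤ p k) :
    HasSum (fun N : ℕ => (2*(N:ℝ)+1) * cc p N) 1 := by
  have h := (fubini hnn hsum hsymm hmono (fun _ => 1) 1 (fun _ => zero_le_one)
    (fun _ => le_refl 1)).2
  have h1 : ∑' k : ℤ, p k * 1 = 1 := by
    simp only [mul_one]
    exact hsum.tsum_eq
  have h2 : ∀ N : ℕ, cc p N * ∑ k ∈ Finset.Icc (-(N:ℤ)) (N:ℤ), (1:ℝ)
      = (2*(N:ℝ)+1) * cc p N := by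
    intro N
    rw [Finset.sum_const, card_Icc_int N, nsmul_eq_mul, mul_one]
    push_cast
    ring
  rw [h1] at h
  rw [tsum_congr h2] at h
  exact (Summable.hasSum_iff (w_summable hnn hsum hsymm hmono).1).mpr h.symm

lemma core (hnn : ∀ k, 0 ≤ p k) (hsum : HasSum p 1)
    (hsymm : ∀ k : ℤ, p k = p (-k)) (hmono : ∀ k k' : ℤ, |k| ≤ |k'| → p k' ≤ p k)
    (a : ℤ → ℝ) (C L ε : ℝ) (N0 : ℕ)
    (ha0 : ∀ k, 0 ≤ a k) (haC : ∀ k, a k ≤ C) (hε : 0 ≤ ε)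
    (hS : ∀ N : ℕ, N0 ≤ N →
      |(2*(N:ℝ)+1)⁻¹ * ∑ k ∈ Finset.Icc (-(N:ℤ)) (N:ℤ), a k - L| ≤ ε) :
    |(∑' k : ℤ, p k * a k) - L| ≤ (N0:ℝ)*(2*(N0:ℝ)+1)*(C+|L|)*p 0 + ε := by
  have hC : 0 ≤ C := le_trans (ha0 0) (haC 0)
  obtain ⟨hTsum, hTeq⟩ := fubini hnn hsum hsymm hmono a C ha0 haC
  set T : ℕ → ℝ := fun N => ∑ k ∈ Finset.Icc (-(N:ℤ)) (N:ℤ), a k with hT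
  set w : ℕ → ℝ := fun N => (2*(N:ℝ)+1) * cc p N with hw
  set S : ℕ → ℝ := fun N => (2*(N:ℝ)+1)⁻¹ * T N with hSdef
  have hW : HasSum w 1 := w_hasSum_one hnn hsum hsymm hmono
  have hne : ∀ N : ℕ, (2*(N:ℝ)+1) ≠ 0 := fun N => by positivity
  set h : ℕ → ℝ := fun N => w N * (S N - L) with hh
  have hkey : ∀ N : ℕ, cc p N * T N = h N + w N * L := by
    intro N
    rw [hh, hw, hSdef]
    simp only
    field_simp
    ring
  have hh_summable : Summable h := by
    have h1 : Summable (fun N => cc p N * T N) := hTsum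
    have h2 : Summable (fun N => w N * L) := hW.summable.mul_right L
    have := h1.sub h2
    exact this.congr fun N => by rw [hkey N]; ring
  have hsum_split : ∑' N : ℕ, cc p N * T N = (∑' N : ℕ, h N) + L := by
    rw [tsum_congr hkey, Summable.tsum_add hh_summable (hW.summable.mul_right L),
      tsum_mul_right, hW.tsum_eq, one_mul]
  -- bounds
  have hT0 : ∀ N : ℕ, 0 ≤ T N := fun N => Finset.sum_nonneg fun k _ => ha0 k
  have hTC : ∀ N : ℕ, T N ≤ (2*(N:ℝ)+1) * C := by
    intro N
    have := Finset.sum_le_card_nsmul (Finset.Icc (-(N:ℤ)) (N:ℤ)) a C (fun k _ => haC k)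
    rw [card_Icc_int N, nsmul_eq_mul] at this
    calc T N ≤ ((2*N+1 : ℕ) : ℝ) * C := this
      _ = (2*(N:ℝ)+1) * C := by push_cast; ring
  have hSb : ∀ N : ℕ, |S N - L| ≤ C + |L| := by
    intro N
    have h0 : 0 ≤ S N := mul_nonneg (by positivity) (hT0 N)
    have h1 : S N ≤ C := by
      rw [hSdef]
      simp only
      rw [inv_mul_le_iff₀ (by positivity : (0:ℝ) < 2*(N:ℝ)+1)]
      calc T N ≤ (2*(N:ℝ)+1) * C := hTC N
        _ = (2*(N:ℝ)+1) * C := rfl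
    calc |S N - L| ≤ |S N| + |L| := abs_sub _ _
      _ ≤ C + |L| := by
          rw [abs_of_nonneg h0]
          linarith
  have hw_nonneg : ∀ N : ℕ, 0 ≤ w N := fun N =>
    mul_nonneg (by positivity) (cc_nonneg hmono N)
  have habs : ∀ N : ℕ, |h N| = w N * |S N - L| := by
    intro N
    rw [hh]
    simp only
    rw [abs_mul, abs_of_nonneg (hw_nonneg N)]
  have habs_summable : Summable (fun N => |h N|) := hh_summable.abs
  -- main bound on ∑' |h|
  set B : ℝ := (2*(N0:ℝ)+1) * p 0 * (C + |L|) with hB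
  have hCL : 0 ≤ C + |L| := by positivity
  have hwi : ∀ i : ℕ, i < N0 → w i ≤ (2*(N0:ℝ)+1) * p 0 := by
    intro i hi
    have h1 : cc p i ≤ p (i : ℤ) := cc_le hnn i
    have h2 : p (i : ℤ) ≤ p 0 := hmono 0 (i : ℤ) (by simpa using abs_nonneg (i:ℤ))
    have h3 : (2*(i:ℝ)+1) ≤ (2*(N0:ℝ)+1) := by
      have : (i:ℝ) ≤ (N0:ℝ) := by exact_mod_cast hi.le
      linarith
    have h4 : 0 ≤ cc p i := cc_nonneg hmono i
    calc w i = (2*(i:ℝ)+1) * cc p i := rfl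
      _ ≤ (2*(N0:ℝ)+1) * cc p i := mul_le_mul_of_nonneg_right h3 h4
      _ ≤ (2*(N0:ℝ)+1) * p (i : ℤ) := mul_le_mul_of_nonneg_left h1 (by positivity)
      _ ≤ (2*(N0:ℝ)+1) * p 0 := mul_le_mul_of_nonneg_left h2 (by positivity)
  have hfirst : ∑ i ∈ range N0, |h i| ≤ (N0:ℝ) * B := by
    have := Finset.sum_le_card_nsmul (range N0) (fun i => |h i|) B ?_
    · rwa [Finset.card_range, nsmul_eq_mul] at this
    · intro i hi
      rw [Finset.mem_range] at hi
      show |h i| ≤ B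
      rw [habs i, hB]
      calc w i * |S i - L| ≤ ((2*(N0:ℝ)+1) * p 0) * (C + |L|) :=
          mul_le_mul (hwi i hi) (hSb i) (abs_nonneg _)
            (mul_nonneg (by positivity) (hnn 0))
        _ = (2*(N0:ℝ)+1) * p 0 * (C + |L|) := by ring
  have htail_summable : Summable (fun i : ℕ => |h (i + N0)|) :=
    (summable_nat_add_iff N0).mpr habs_summable
  have hwtail_summable : Summable (fun i : ℕ => w (i + N0)) :=
    (summable_nat_add_iff N0).mpr hW.summable
  have hwtail_le : ∑' i : ℕ, w (i + N0) ≤ 1 := by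
    have hsplit := Summable.sum_add_tsum_nat_add (f := w) N0 hW.summable
    rw [hW.tsum_eq] at hsplit
    have : 0 ≤ ∑ i ∈ range N0, w i := Finset.sum_nonneg fun i _ => hw_nonneg i
    linarith
  have hsecond : ∑' i : ℕ, |h (i + N0)| ≤ ε := by
    calc ∑' i : ℕ, |h (i + N0)| ≤ ∑' i : ℕ, w (i + N0) * ε := by
          refine Summable.tsum_le_tsum (fun i => ?_) htail_summable (hwtail_summable.mul_right ε)
          rw [habs]
          exact mul_le_mul_of_nonneg_left (hS (i + N0) (Nat.le_add_left N0 i))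
            (hw_nonneg _)
      _ = (∑' i : ℕ, w (i + N0)) * ε := tsum_mul_right
      _ ≤ 1 * ε := mul_le_mul_of_nonneg_right hwtail_le hε
      _ = ε := one_mul ε
  have htsum_abs : ∑' N : ℕ, |h N| ≤ (N0:ℝ) * B + ε := by
    have hsplit := Summable.sum_add_tsum_nat_add (f := fun N => |h N|) N0 habs_summable
    rw [← hsplit]
    exact add_le_add hfirst hsecond
  have hmain : |∑' N : ℕ, h N| ≤ (N0:ℝ) * B + ε := by
    have := norm_tsum_le_tsum_norm (f := h) (by simpa [Real.norm_eq_abs] using habs_summable)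
    rw [Real.norm_eq_abs] at this
    calc |∑' N : ℕ, h N| ≤ ∑' N : ℕ, ‖h N‖ := this
      _ = ∑' N : ℕ, |h N| := by simp [Real.norm_eq_abs]
      _ ≤ (N0:ℝ) * B + ε := htsum_abs
  rw [hTeq]
  have : ∑' N : ℕ, cc p N * T N = (∑' N : ℕ, h N) + L := hsum_split
  rw [this]
  have hB_eq : (N0:ℝ) * B = (N0:ℝ)*(2*(N0:ℝ)+1)*(C+|L|)*p 0 := by rw [hB]; ring
  calc |(∑' N : ℕ, h N) + L - L| = |∑' N : ℕ, h N| := by rw [add_sub_cancel_right]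
    _ ≤ (N0:ℝ) * B + ε := hmain
    _ = (N0:ℝ)*(2*(N0:ℝ)+1)*(C+|L|)*p 0 + ε := by rw [hB_eq]

end PooledWeak

open PooledWeak in
/-- The pooled measures converge weakly to the limiting feature distribution as the
pooling width tends to infinity. -/
theorem pooled_weak_convergence {X : Type*} [MetricSpace X] [CompleteSpace X]
    [TopologicalSpace.SeparableSpace X] [MeasurableSpace X] [BorelSpace X]
    (q : ℝ → ℤ → ℝ)
    (hq_nonneg : ∀ σ : ℝ, ∀ k : ℤ, 0 ≤ q σ k)
    (hq_pmf : ∀ σ : ℝ, HasSum (q σ) 1)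
    (hq_symm : ∀ σ : ℝ, ∀ k : ℤ, q σ k = q σ (-k))
    (hq_mono : ∀ σ : ℝ, ∀ k k' : ℤ, |k| ≤ |k'| → q σ k' ≤ q σ k)
    (hq_vanish : ∀ k : ℤ, Tendsto (fun σ => q σ k) atTop (nhds 0))
    (z : ℤ → X)
    (F : Measure X) [IsProbabilityMeasure F]
    (hweak : ∀ f : BoundedContinuousFunction X ℝ,
      Tendsto (fun N : ℕ => (2 * (N : ℝ) + 1)⁻¹ * ∑ k ∈ Finset.Icc (-(N:ℤ)) (N:ℤ), f (z k))
        atTop (nhds (∫ x, f x ∂F))) :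
    ∀ f : BoundedContinuousFunction X ℝ,
      Tendsto (fun σ : ℝ => ∑' k : ℤ, q σ k * f (z k)) atTop (nhds (∫ x, f x ∂F)) := by
  intro f
  set L : ℝ := ∫ x, f x ∂F with hL
  set C : ℝ := ‖f‖ with hC
  have hC0 : (0:ℝ) ≤ C := norm_nonneg f
  have hfb : ∀ k : ℤ, |f (z k)| ≤ C := fun k => by
    have := f.norm_coe_le_norm (z k)
    rwa [Real.norm_eq_abs] at this
  set a : ℤ → ℝ := fun k => f (z k) + C with ha
  have ha0 : ∀ k, 0 ≤ a k := fun k => by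
    have := (abs_le.mp (hfb k)).1
    simp only [ha]
    linarith
  have ha2C : ∀ k, a k ≤ 2 * C := fun k => by
    have := (abs_le.mp (hfb k)).2
    simp only [ha]
    linarith
  rw [Metric.tendsto_atTop]
  intro ε hε
  obtain ⟨N0, hN0⟩ := (Metric.tendsto_atTop.mp (hweak f)) (ε/4) (by positivity)
  set M : ℝ := (N0:ℝ)*(2*(N0:ℝ)+1)*(2*C+|L+C|) with hM
  have hM0 : (0:ℝ) ≤ M := by positivity
  obtain ⟨σ0, hσ0⟩ := (Metric.tendsto_atTop.mp (hq_vanish 0)) (ε/(2*(M+1))) (by positivity)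
  refine ⟨σ0, fun σ hσ => ?_⟩
  have hq0 : q σ 0 < ε/(2*(M+1)) := by
    have := hσ0 σ hσ
    rwa [Real.dist_eq, sub_zero, abs_of_nonneg (hq_nonneg σ 0)] at this
  -- Cesàro hypothesis for the shifted function
  have hScard : ∀ N : ℕ,
      (2*(N:ℝ)+1)⁻¹ * ∑ k ∈ Finset.Icc (-(N:ℤ)) (N:ℤ), a k
        = (2*(N:ℝ)+1)⁻¹ * (∑ k ∈ Finset.Icc (-(N:ℤ)) (N:ℤ), f (z k)) + C := by
    intro N
    have hcard : ((Finset.Icc (-(N:ℤ)) (N:ℤ)).card : ℝ) = 2*(N:ℝ)+1 := by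
      rw [card_Icc_int N]; push_cast; ring
    have hsumeq : ∑ k ∈ Finset.Icc (-(N:ℤ)) (N:ℤ), a k
        = (∑ k ∈ Finset.Icc (-(N:ℤ)) (N:ℤ), f (z k)) + (2*(N:ℝ)+1) * C := by
      simp only [ha]
      rw [Finset.sum_add_distrib, Finset.sum_const, nsmul_eq_mul, hcard]
    rw [hsumeq, mul_add, inv_mul_cancel_left₀ (by positivity : (2*(N:ℝ)+1) ≠ 0)]
  have hS : ∀ N : ℕ, N0 ≤ N →
      |(2*(N:ℝ)+1)⁻¹ * ∑ k ∈ Finset.Icc (-(N:ℤ)) (N:ℤ), a k - (L + C)| ≤ ε/4 := by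
    intro N hN
    have := hN0 N hN
    rw [Real.dist_eq] at this
    rw [hScard N]
    have heq : (2*(N:ℝ)+1)⁻¹ * (∑ k ∈ Finset.Icc (-(N:ℤ)) (N:ℤ), f (z k)) + C - (L + C)
        = (2*(N:ℝ)+1)⁻¹ * (∑ k ∈ Finset.Icc (-(N:ℤ)) (N:ℤ), f (z k)) - L := by ring
    rw [heq]
    exact this.le
  have key := core (hq_nonneg σ) (hq_pmf σ) (hq_symm σ) (hq_mono σ)
    a (2*C) (L+C) (ε/4) N0 ha0 ha2C (by positivity) hS
  -- relate the two tsums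
  have hsm : Summable (fun k : ℤ => q σ k * f (z k)) := by
    refine Summable.of_norm_bounded (g := fun k => q σ k * C) ((hq_pmf σ).summable.mul_right C)
      fun k => ?_
    rw [Real.norm_eq_abs, abs_mul, abs_of_nonneg (hq_nonneg σ k)]
    exact mul_le_mul_of_nonneg_left (hfb k) (hq_nonneg σ k)
  have hshift : ∑' k : ℤ, q σ k * a k = (∑' k : ℤ, q σ k * f (z k)) + C := by
    have h2 : Summable (fun k : ℤ => q σ k * C) := (hq_pmf σ).summable.mul_right C
    have heq : (fun k : ℤ => q σ k * a k)
        = fun k : ℤ => q σ k * f (z k) + q σ k * C := by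
      funext k; simp only [ha]; ring
    rw [heq, Summable.tsum_add hsm h2, ((hq_pmf σ).mul_right C).tsum_eq, one_mul]
  rw [Real.dist_eq]
  have habs_eq : |(∑' k : ℤ, q σ k * f (z k)) - L| = |(∑' k : ℤ, q σ k * a k) - (L + C)| := by
    rw [hshift]
    congr 1
    ring
  rw [habs_eq]
  calc |(∑' k : ℤ, q σ k * a k) - (L + C)|
      ≤ (N0:ℝ)*(2*(N0:ℝ)+1)*(2*C+|L+C|)*(q σ 0) + ε/4 := key
    _ = M * (q σ 0) + ε/4 := by rw [hM]
    _ < ε := by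
        have h1 : M * q σ 0 ≤ M * (ε/(2*(M+1))) :=
          mul_le_mul_of_nonneg_left hq0.le hM0
        have h2 : M * (ε/(2*(M+1))) ≤ ε/2 := by
          have hMp : (0:ℝ) < 2*(M+1) := by linarith
          have heq : M * (ε/(2*(M+1))) = M*ε / (2*(M+1)) := by ring
          rw [heq, div_le_div_iff₀ hMp (by norm_num : (0:ℝ) < 2)]
          nlinarith
        linarith
end

section
/- Let $q_\sigma$ satisfy the pooling PMF axioms P.3 (Kronecker delta at $\sigma = 0$), P.4 (continuity at $\sigma = 0$), and P.5 (tail monotonicity: there exist $\epsilon > 0$, $K$ with $q_\sigma(k)$ nondecreasing in $\sigma$ on $[0,\epsilon]$ for $|k| \ge K$). Let $(c_k)_{k \in \mathbb{Z}}$ be a nonnegative sequence with $\sum_k q_\sigma(k) c_k < \infty$ for all $\sigma > 0$. Then $\lim_{\sigma \to 0^+} \sum_{k=-\infty}^\infty q_\sigma(k) c_k = c_0$. -/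
/-!
For `|k| ≥ K` and `σ ∈ [0, ε]`, monotonicity squeezes `q σ k` between `q 0 k ≥ 0` and `q ε k`,
so the summable sequence `q ε k * c k` dominates all but finitely many terms; those finitely many
converge by P.4. Dominated convergence then gives the limit `∑ q 0 k * c k = c 0`.
-/

open Filter Topology Set

theorem tendsto_tsum_of_dominated_convergence_off_finset {α β G : Type*} {𝓕 : Filter α}
    [NormedAddCommGroup G] [CompleteSpace G] {f : α → β → G} {g : β → G} {bound : β → ℝ}
    (s : Finset β) (h_sum : Summable bound) (hab : ∀ k, Tendsto (f · k) 𝓕 (𝓝 (g k)))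
    (h_bound : ∀ᶠ n in 𝓕, ∀ k ∉ s, ‖f n k‖ ≤ bound k) :
    Tendsto (∑' k, f · k) 𝓕 (𝓝 (∑' k, g k)) := by
  classical
  let bound' : β → ℝ := s.piecewise (fun k => ‖g k‖ + 1) bound
  have h_sum' : Summable bound' := h_sum.congr_cofinite <|
    s.finite_toSet.eventually_cofinite_notMem.mono fun k hk =>
      (s.piecewise_eq_of_notMem _ _ hk).symm
  have h_near : ∀ᶠ n in 𝓕, ∀ k ∈ s, ‖f n k‖ ≤ ‖g k‖ + 1 :=
    s.eventually_all.2 fun k _ => (hab k).norm.eventually (eventually_le_nhds (lt_add_one _))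
  refine tendsto_tsum_of_dominated_convergence h_sum' hab ?_
  filter_upwards [h_bound, h_near] with n h_out h_in k
  by_cases hk : k ∈ s
  · simpa [bound', hk] using h_in k hk
  · simpa [bound', hk] using h_out k hk

theorem norm_mul_le_of_monotoneOn {q : ℝ → ℝ} {ε σ c : ℝ} (hmono : MonotoneOn q (Icc 0 ε))
    (hq : 0 ≤ q 0) (hc : 0 ≤ c) (hσ : σ ∈ Icc 0 ε) : ‖q σ * c‖ ≤ q ε * c := by
  have hε : 0 ≤ ε := hσ.1.trans hσ.2
  have h0 : q 0 ≤ q σ := hmono ⟨le_rfl, hε⟩ hσ hσ.1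
  have h1 : q σ ≤ q ε := hmono hσ ⟨hε, le_rfl⟩ hσ.2
  rw [Real.norm_of_nonneg (mul_nonneg (hq.trans h0) hc)]
  exact mul_le_mul_of_nonneg_right h1 hc

theorem pooled_sum_tendsto_center_general
    (q : ℝ → ℤ → ℝ)
    (hP3 : ∀ k : ℤ, q 0 k = if k = 0 then 1 else 0)
    (hP4 : ∀ k : ℤ, Tendsto (fun σ => q σ k) (nhdsWithin 0 (Set.Ici 0)) (nhds (q 0 k)))
    (hP5 : ∃ ε > (0:ℝ), ∃ K : ℕ, ∀ k : ℤ, (K : ℤ) ≤ |k| →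
      MonotoneOn (fun σ => q σ k) (Set.Icc 0 ε))
    (c : ℤ → ℝ)
    (hc_nonneg : ∀ k : ℤ, 0 ≤ c k)
    (hsum : ∀ σ > (0:ℝ), Summable (fun k : ℤ => q σ k * c k)) :
    Tendsto (fun σ : ℝ => ∑' k : ℤ, q σ k * c k) (nhdsWithin 0 (Set.Ioi 0)) (nhds (c 0)) := by
  obtain ⟨ε, hε, K, hK⟩ := hP5
  have hq0 : ∀ k, 0 ≤ q 0 k := fun k => by rw [hP3]; split_ifs <;> norm_num
  have h_lim : ∀ k, Tendsto (fun σ => q σ k * c k) (𝓝[>] 0) (𝓝 (q 0 k * c k)) := fun k =>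
    ((hP4 k).mono_left (nhdsWithin_mono _ Ioi_subset_Ici_self)).mul_const _
  have h_tail : ∀ᶠ σ in 𝓝[>] (0 : ℝ), ∀ k ∉ Finset.Ioo (-(K : ℤ)) K,
      ‖q σ k * c k‖ ≤ q ε k * c k := by
    filter_upwards [Ioc_mem_nhdsGT hε] with σ hσ k hk
    have hKk : (K : ℤ) ≤ |k| := by
      rw [Finset.mem_Ioo, ← abs_lt, not_lt] at hk
      exact hk
    exact norm_mul_le_of_monotoneOn (hK k hKk) (hq0 k) (hc_nonneg k) (Ioc_subset_Icc_self hσ)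
  have h := tendsto_tsum_of_dominated_convergence_off_finset _ (hsum ε hε) h_lim h_tail
  simpa only [hP3, ite_mul, one_mul, zero_mul, tsum_ite_eq] using h

/-- As `σ → 0⁺`, the pooled sum of a nonnegative sequence tends to its value at `0`. -/
theorem pooled_sum_tendsto_center
    (q : ℝ → ℤ → ℝ)
    (hq_nonneg : ∀ σ ≥ (0:ℝ), ∀ k : ℤ, 0 ≤ q σ k)
    (hq_pmf : ∀ σ ≥ (0:ℝ), HasSum (q σ) 1)
    (hP3 : ∀ k : ℤ, q 0 k = if k = 0 then 1 else 0)
    (hP4 : ∀ k : ℤ, Tendsto (fun σ => q σ k) (nhdsWithin 0 (Set.Ici 0)) (nhds (q 0 k)))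
    (hP5 : ∃ ε > (0:ℝ), ∃ K : ℕ, ∀ k : ℤ, (K : ℤ) ≤ |k| →
      MonotoneOn (fun σ => q σ k) (Set.Icc 0 ε))
    (c : ℤ → ℝ)
    (hc_nonneg : ∀ k : ℤ, 0 ≤ c k)
    (hsum : ∀ σ > (0:ℝ), Summable (fun k : ℤ => q σ k * c k)) :
    Tendsto (fun σ : ℝ => ∑' k : ℤ, q σ k * c k) (nhdsWithin 0 (Set.Ioi 0)) (nhds (c 0)) :=
  pooled_sum_tendsto_center_general q hP3 hP4 hP5 c hc_nonneg hsum
end
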